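/- arXiv:1108.0477 — 5 statements merged into one kernel-verified Lean document; each statement's English description precedes it below -/
import Mathlib

section
/- For every τ ≥ 0, the risk of complex soft thresholding at the zero signal equals r(0, τ) = 2·∫_τ^∞ ω·(ω − τ)²·exp(−ω²) dω = 2·χ₂(τ). -/
open MeasureTheory Filter

/-- Complex soft thresholding: `η(x;τ) = (1 - τ/|x|)·x` if `|x| > τ`, else `0`. -/
noncomputable def softThresh (x : ℂ) (τ : ℝ) : ℂ :=
  if τ < ‖x‖ then ((1 - τ / ‖x‖ : ℝ) : ℂ) * x else 0

/-- Risk of complex soft thresholding at amplitude `μ`: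
`r(μ,τ) = ∫_{ℝ²} |η(μ + z₁ + i z₂; τ) − μ|² (1/π) e^{−(z₁²+z₂²)} dz₁ dz₂`. -/
noncomputable def softRisk (μ τ : ℝ) : ℝ :=
  ∫ z : ℝ × ℝ,
    ‖softThresh ((μ : ℂ) + (z.1 : ℂ) + Complex.I * (z.2 : ℂ)) τ - (μ : ℂ)‖ ^ 2 *
      ((1 / Real.pi) * Real.exp (-(z.1 ^ 2 + z.2 ^ 2)))

/-- `χ₂(τ) = ∫_τ^∞ ω (ω − τ)² e^{−ω²} dω`. -/
noncomputable def chi2 (τ : ℝ) : ℝ :=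
  ∫ ω in Set.Ioi τ, ω * (ω - τ) ^ 2 * Real.exp (-ω ^ 2)

/-!
For `τ ≥ 0` the modulus of `η(x;τ)` is `(|x| - τ)⁺`, so at the zero signal the integrand of the
risk is a radial function of `z₁ + i z₂`. Identifying `ℝ × ℝ` with `ℂ` and integrating in polar
coordinates gives `2π ∫₀^∞ r (r - τ)⁺² e^{-r²}/π dr`, and the positive part cuts the range down
to `(τ, ∞)`.
-/

lemma integral_realProd_eq_integral_complex {E : Type*} [NormedAddCommGroup E] [NormedSpace ℝ E]
    (f : ℂ → E) : ∫ z : ℝ × ℝ, f (z.1 + z.2 * Complex.I) = ∫ w : ℂ, f w := by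
  rw [← Complex.volume_preserving_equiv_real_prod.symm.integral_comp
    Complex.measurableEquivRealProd.symm.measurableEmbedding]
  simp only [Complex.measurableEquivRealProd_symm_apply, Complex.mk_eq_add_mul_I]

lemma Complex.integral_fun_norm {E : Type*} [NormedAddCommGroup E] [NormedSpace ℝ E]
    (f : ℝ → E) : ∫ w : ℂ, f ‖w‖ = (2 * Real.pi) • ∫ r in Set.Ioi (0 : ℝ), r • f r := by
  have hball : volume.real (Metric.ball (0 : ℂ) 1) = Real.pi := by
    simp [Measure.real, Complex.volume_ball]
  rw [integral_fun_norm_addHaar, Complex.finrank_real_complex, hball]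
  simp only [Nat.reduceSub, pow_one]
  rw [mul_smul, ← Nat.cast_smul_eq_nsmul ℝ, Nat.cast_ofNat]

lemma norm_softThresh {τ : ℝ} (hτ : 0 ≤ τ) (x : ℂ) :
    ‖softThresh x τ‖ = max (‖x‖ - τ) 0 := by
  unfold softThresh
  split_ifs with h
  · have hx : 0 < ‖x‖ := hτ.trans_lt h
    rw [norm_mul, Complex.norm_real, Real.norm_eq_abs, abs_of_nonneg, max_eq_left (by linarith)]
    · field_simp
    · rw [sub_nonneg, div_le_one hx]; exact h.le
  · simp [max_eq_right (sub_nonpos.2 (not_lt.1 h))]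

lemma setIntegral_Ioi_zero_mul_max_sub_sq {τ : ℝ} (hτ : 0 ≤ τ) (h : ℝ → ℝ) :
    ∫ r in Set.Ioi (0 : ℝ), r * max (r - τ) 0 ^ 2 * h r =
      ∫ r in Set.Ioi τ, r * (r - τ) ^ 2 * h r := by
  have hind : (fun r => r * max (r - τ) 0 ^ 2 * h r) =
      (Set.Ioi τ).indicator (fun r => r * (r - τ) ^ 2 * h r) := by
    ext r
    by_cases hr : τ < r
    · simp [hr, max_eq_left (sub_nonneg.2 hr.le)]
    · simp [hr, max_eq_right (sub_nonpos.2 (not_lt.1 hr))]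
  rw [hind, setIntegral_indicator measurableSet_Ioi, Set.Ioi_inter_Ioi, sup_eq_right.2 hτ]

/-- The risk of complex soft thresholding at the zero signal:
`r(0, τ) = 2 ∫_τ^∞ ω (ω − τ)² e^{−ω²} dω = 2 χ₂(τ)`. -/
theorem softRisk_zero (τ : ℝ) (hτ : 0 ≤ τ) :
    softRisk 0 τ = 2 * ∫ ω in Set.Ioi τ, ω * (ω - τ) ^ 2 * Real.exp (-ω ^ 2) ∧
    softRisk 0 τ = 2 * chi2 τ := by
  set g : ℝ → ℝ := fun r => max (r - τ) 0 ^ 2 * (1 / Real.pi * Real.exp (-r ^ 2))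
  have hradial : softRisk 0 τ = ∫ z : ℝ × ℝ, g ‖(z.1 : ℂ) + z.2 * Complex.I‖ := by
    refine integral_congr_ae (Eventually.of_forall fun z => ?_)
    simp only [g, Complex.ofReal_zero, zero_add, sub_zero, mul_comm Complex.I,
      norm_softThresh hτ, Complex.norm_add_mul_I]
    rw [Real.sq_sqrt (by positivity)]
  have hrisk : softRisk 0 τ = 2 * ∫ ω in Set.Ioi τ, ω * (ω - τ) ^ 2 * Real.exp (-ω ^ 2) := by
    rw [hradial, integral_realProd_eq_integral_complex (fun w => g ‖w‖),
      Complex.integral_fun_norm, ← setIntegral_Ioi_zero_mul_max_sub_sq hτ]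
    simp only [g, smul_eq_mul, ← mul_assoc]
    simp only [mul_comm _ (1 / Real.pi), mul_assoc, integral_const_mul]
    field_simp
  exact ⟨hrisk, hrisk⟩
end

section
/- For every τ ≥ 0, the soft-thresholding risk r(μ, τ) is a nondecreasing function of μ on [0, ∞): for all 0 ≤ μ₁ ≤ μ₂, r(μ₁, τ) ≤ r(μ₂, τ). -/
open MeasureTheory Filter

/-!
The risk is monotone already for each fixed noise value `w = z₁ + i z₂`: the loss
`μ ↦ ‖η(μ + w; τ) - μ‖²` is nondecreasing on `[0, ∞)`. When `μ + w` survives the threshold, the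
error is `w - τ (μ + w)/‖μ + w‖`, whose squared norm is `‖w‖² + τ² - 2τ ⟪w, μ + w⟫/‖μ + w‖`; the
last ratio is `‖w‖` times the cosine of the angle between `w` and `μ + w`, and this angle widens as
`μ` grows. When one of the two points is thresholded to `0`, the comparison follows from
`‖η(x; τ)‖ = ‖x‖ - τ` above the threshold and the `1`-Lipschitz property of `μ ↦ ‖μ + w‖`.
Integrating against the Gaussian weight is legitimate since `‖η(x; τ) - x‖ ≤ τ`.
-/

open scoped InnerProductSpace

section SoftThresh

variable {x : ℂ} {τ : ℝ}

theorem softThresh_of_le (h : ‖x‖ ≤ τ) : softThresh x τ = 0 :=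
  if_neg h.not_gt

theorem softThresh_of_lt (h : τ < ‖x‖) : softThresh x τ = x - (τ / ‖x‖) • x := by
  simp [softThresh, if_pos h, Complex.real_smul, sub_mul]

theorem norm_softThresh_of_lt (hτ : 0 ≤ τ) (h : τ < ‖x‖) : ‖softThresh x τ‖ = ‖x‖ - τ := by
  have hx : 0 < ‖x‖ := hτ.trans_lt h
  rw [softThresh, if_pos h, norm_mul, Complex.norm_real, Real.norm_of_nonneg
    (sub_nonneg.2 ((div_le_one hx).2 h.le))]
  field_simp

theorem norm_softThresh_sub_self_le (hτ : 0 ≤ τ) : ‖softThresh x τ - x‖ ≤ τ := by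
  rcases le_or_gt ‖x‖ τ with h | h
  · simpa [softThresh_of_le h] using h
  · rw [softThresh_of_lt h, sub_sub_cancel_left, norm_neg, norm_smul, Real.norm_of_nonneg
      (div_nonneg hτ (norm_nonneg x)), div_mul_cancel₀ _ (hτ.trans_lt h).ne']

theorem norm_softThresh_sub_sq_of_lt (hτ : 0 ≤ τ) (y : ℂ) (h : τ < ‖x‖) :
    ‖softThresh x τ - y‖ ^ 2 = ‖x - y‖ ^ 2 - 2 * τ * (⟪x - y, x⟫_ℝ / ‖x‖) + τ ^ 2 := by
  rw [softThresh_of_lt h, sub_right_comm, norm_sub_sq_real, inner_smul_right, norm_smul,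
    Real.norm_of_nonneg (div_nonneg hτ (norm_nonneg x)), div_mul_cancel₀ _ (hτ.trans_lt h).ne']
  ring

theorem measurable_softThresh (τ : ℝ) : Measurable (softThresh · τ) :=
  Measurable.ite (measurableSet_lt measurable_const measurable_norm) (by fun_prop) measurable_const

end SoftThresh

theorem real_inner_div_norm_ofReal_add_le_of_le (w : ℂ) {μ₁ μ₂ : ℝ} (hμ₁ : 0 ≤ μ₁) (h : μ₁ ≤ μ₂)
    (h₁ : (μ₁ : ℂ) + w ≠ 0) (h₂ : (μ₂ : ℂ) + w ≠ 0) :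
    ⟪w, μ₂ + w⟫_ℝ / ‖(μ₂ : ℂ) + w‖ ≤ ⟪w, μ₁ + w⟫_ℝ / ‖(μ₁ : ℂ) + w‖ := by
  have inner_eq (μ : ℝ) : ⟪w, μ + w⟫_ℝ = w.re * μ + (w.re ^ 2 + w.im ^ 2) := by
    simp only [Complex.inner, Complex.mul_re, Complex.add_re, Complex.add_im, Complex.ofReal_re,
      Complex.ofReal_im, Complex.conj_re, Complex.conj_im]
    ring
  have norm_sq_eq (μ : ℝ) : ‖(μ : ℂ) + w‖ ^ 2 = (μ + w.re) ^ 2 + w.im ^ 2 := by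
    simp only [Complex.sq_norm, Complex.normSq_apply, Complex.add_re, Complex.add_im,
      Complex.ofReal_re, Complex.ofReal_im, zero_add]
    ring
  rw [div_le_div_iff₀ (norm_pos_iff.2 h₂) (norm_pos_iff.2 h₁), inner_eq, inner_eq]
  set P₁ := w.re * μ₁ + (w.re ^ 2 + w.im ^ 2)
  set P₂ := w.re * μ₂ + (w.re ^ 2 + w.im ^ 2)
  have e₁ := norm_sq_eq μ₁
  have e₂ := norm_sq_eq μ₂
  set s₁ := ‖(μ₁ : ℂ) + w‖
  set s₂ := ‖(μ₂ : ℂ) + w‖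
  have key : (P₁ * s₂) ^ 2 - (P₂ * s₁) ^ 2 = w.im ^ 2 * (μ₂ - μ₁) * (μ₁ * P₂ + μ₂ * P₁) := by
    linear_combination P₁ ^ 2 * e₂ - P₂ ^ 2 * e₁
  have hs₁ : 0 ≤ s₁ := norm_nonneg _
  have hs₂ : 0 ≤ s₂ := norm_nonneg _
  have hμ₂ : 0 ≤ μ₂ := hμ₁.trans h
  rcases le_or_gt 0 P₁ with hP₁ | hP₁
  · rcases le_or_gt 0 P₂ with hP₂ | hP₂
    · refine le_of_sq_le_sq ?_ (mul_nonneg hP₁ hs₂)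
      nlinarith [mul_nonneg (mul_nonneg (sq_nonneg w.im) (sub_nonneg.2 h))
        (add_nonneg (mul_nonneg hμ₁ hP₂) (mul_nonneg hμ₂ hP₁))]
    · nlinarith [mul_nonneg hP₁ hs₂, mul_nonneg (neg_nonneg.2 hP₂.le) hs₁]
  · have hre : w.re < 0 := by
      by_contra! hre
      nlinarith [mul_nonneg hre hμ₁]
    have hP₂ : P₂ ≤ 0 := by nlinarith [mul_nonpos_of_nonpos_of_nonneg hre.le (sub_nonneg.2 h)]
    have hsq : (-(P₁ * s₂)) ^ 2 ≤ (-(P₂ * s₁)) ^ 2 := by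
      nlinarith [mul_nonneg (mul_nonneg (sq_nonneg w.im) (sub_nonneg.2 h))
        (add_nonneg (mul_nonneg hμ₁ (neg_nonneg.2 hP₂)) (mul_nonneg hμ₂ (neg_nonneg.2 hP₁.le)))]
    linarith [le_of_sq_le_sq hsq (neg_nonneg.2 (mul_nonpos_of_nonpos_of_nonneg hP₂ hs₁))]

theorem monotoneOn_norm_softThresh_ofReal_add_sub_sq {τ : ℝ} (hτ : 0 ≤ τ) (w : ℂ) :
    MonotoneOn (fun μ : ℝ => ‖softThresh (μ + w) τ - μ‖ ^ 2) (Set.Ici 0) := by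
  intro μ₁ hμ₁ μ₂ hμ₂ h
  simp only [Set.mem_Ici] at hμ₁ hμ₂
  have norm_ofReal (μ : ℝ) (hμ : 0 ≤ μ) : ‖(μ : ℂ)‖ = μ := by simp [hμ]
  have lip : |‖(μ₁ : ℂ) + w‖ - ‖(μ₂ : ℂ) + w‖| ≤ μ₂ - μ₁ := by
    have := abs_norm_sub_norm_le ((μ₁ : ℂ) + w) (μ₂ + w)
    rwa [add_sub_add_right_eq_sub, ← Complex.ofReal_sub, Complex.norm_real, Real.norm_eq_abs,
      abs_of_nonpos (sub_nonpos.2 h), neg_sub] at this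
  rw [abs_le] at lip
  rcases le_or_gt ‖(μ₁ : ℂ) + w‖ τ with d₁ | a₁ <;>
    rcases le_or_gt ‖(μ₂ : ℂ) + w‖ τ with d₂ | a₂
  · simpa [softThresh_of_le d₁, softThresh_of_le d₂, abs_of_nonneg, hμ₁, hμ₂]
      using pow_le_pow_left₀ hμ₁ h 2
  · refine pow_le_pow_left₀ (norm_nonneg _) ?_ 2
    have := norm_sub_norm_le (μ₂ : ℂ) (softThresh (μ₂ + w) τ)
    rw [norm_ofReal μ₂ hμ₂, norm_softThresh_of_lt hτ a₂, norm_sub_rev] at this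
    rw [softThresh_of_le d₁, zero_sub, norm_neg, norm_ofReal μ₁ hμ₁]
    linarith
  · refine pow_le_pow_left₀ (norm_nonneg _) ?_ 2
    have := norm_sub_le (softThresh (μ₁ + w) τ) μ₁
    rw [norm_softThresh_of_lt hτ a₁, norm_ofReal μ₁ hμ₁] at this
    rw [softThresh_of_le d₂, zero_sub, norm_neg, norm_ofReal μ₂ hμ₂]
    linarith
  · simp only [norm_softThresh_sub_sq_of_lt hτ _ a₁, norm_softThresh_sub_sq_of_lt hτ _ a₂,
      add_sub_cancel_left]
    have cos_le := real_inner_div_norm_ofReal_add_le_of_le w hμ₁ h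
      (norm_pos_iff.1 (hτ.trans_lt a₁)) (norm_pos_iff.1 (hτ.trans_lt a₂))
    linarith [mul_le_mul_of_nonneg_left cos_le (by positivity : (0 : ℝ) ≤ 2 * τ)]

section Integrability

open Real

theorem integrable_one_add_sq_add_sq_mul_exp_neg :
    Integrable (fun z : ℝ × ℝ => (1 + z.1 ^ 2 + z.2 ^ 2) * exp (-(z.1 ^ 2 + z.2 ^ 2))) := by
  have h₀ : Integrable (fun x : ℝ => exp (-x ^ 2)) := by
    simpa using integrable_exp_neg_mul_sq one_pos
  have h₂ : Integrable (fun x : ℝ => x ^ 2 * exp (-x ^ 2)) := by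
    simpa using integrable_rpow_mul_exp_neg_mul_sq one_pos (by norm_num : (-1 : ℝ) < 2)
  rw [Measure.volume_eq_prod]
  refine (((h₀.mul_prod h₀).add (h₂.mul_prod h₀)).add (h₀.mul_prod h₂)).congr
    (ae_of_all _ fun z => ?_)
  simp only [Pi.add_apply]
  rw [neg_add, exp_add]
  ring

theorem integrable_softRisk_integrand {τ : ℝ} (hτ : 0 ≤ τ) (μ : ℝ) :
    Integrable (fun z : ℝ × ℝ => ‖softThresh ((μ : ℂ) + (z.1 : ℂ) + Complex.I * (z.2 : ℂ)) τ -
      (μ : ℂ)‖ ^ 2 * ((1 / π) * exp (-(z.1 ^ 2 + z.2 ^ 2)))) := by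
  have := measurable_softThresh τ
  refine (integrable_one_add_sq_add_sq_mul_exp_neg.const_mul (2 * (τ ^ 2 + 1) / π)).mono'
    (by fun_prop) (ae_of_all _ fun z => ?_)
  set x : ℂ := μ + z.1 + Complex.I * z.2
  have noise : ‖x - μ‖ ^ 2 = z.1 ^ 2 + z.2 ^ 2 := by
    rw [show x - μ = z.1 + z.2 * Complex.I by simp only [x]; ring, Complex.sq_norm,
      Complex.normSq_add_mul_I]
  have loss : ‖softThresh x τ - μ‖ ≤ τ + ‖x - μ‖ :=
    (norm_sub_le_norm_sub_add_norm_sub _ x _).trans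
      (add_le_add_left (norm_softThresh_sub_self_le hτ) _)
  have quad : (τ + ‖x - μ‖) ^ 2 ≤ 2 * (τ ^ 2 + 1) * (1 + ‖x - μ‖ ^ 2) := by
    nlinarith [sq_nonneg (τ - ‖x - μ‖), sq_nonneg (τ * ‖x - μ‖)]
  rw [Real.norm_of_nonneg (by positivity)]
  calc ‖softThresh x τ - μ‖ ^ 2 * ((1 / π) * exp (-(z.1 ^ 2 + z.2 ^ 2)))
      ≤ 2 * (τ ^ 2 + 1) * (1 + ‖x - μ‖ ^ 2) * ((1 / π) * exp (-(z.1 ^ 2 + z.2 ^ 2))) := by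
        gcongr
        exact (pow_le_pow_left₀ (norm_nonneg _) loss 2).trans quad
    _ = 2 * (τ ^ 2 + 1) / π * ((1 + z.1 ^ 2 + z.2 ^ 2) * exp (-(z.1 ^ 2 + z.2 ^ 2))) := by
        rw [noise]
        ring

end Integrability

/-- For every `τ ≥ 0`, the soft-thresholding risk `r(μ, τ)` is nondecreasing in `μ` on
`[0, ∞)`: for all `0 ≤ μ₁ ≤ μ₂`, `r(μ₁, τ) ≤ r(μ₂, τ)`. -/
theorem softRisk_monotone (τ : ℝ) (hτ : 0 ≤ τ) (μ₁ μ₂ : ℝ) (hμ₁ : 0 ≤ μ₁) (h : μ₁ ≤ μ₂) :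
    softRisk μ₁ τ ≤ softRisk μ₂ τ := by
  refine integral_mono_of_nonneg (ae_of_all _ fun z => by positivity)
    (integrable_softRisk_integrand hτ μ₂) (ae_of_all _ fun z => ?_)
  simp only [add_assoc]
  exact mul_le_mul_of_nonneg_right
    (monotoneOn_norm_softThresh_ofReal_add_sub_sq hτ _ hμ₁ (hμ₁.trans h) h) (by positivity)
end

section
/- Let f : [0, ∞) → [0, ∞) be continuous, nondecreasing, and concave on [0, ∞), with f(0) > 0, and suppose there exists m̄ > 0 with f(m̄) < m̄. Then f has a unique fixed point m* (which satisfies m* > 0), and for every starting point m₀ ≥ 0 the iterates defined by m_{t+1} = f(m_t) converge to m*. -/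
/-!
Concavity with `f 0 > 0` makes `x ↦ f x / x` strictly decreasing on `(0, ∞)`, so `f` has at most
one positive fixed point `p`, lies above the diagonal on `[0, p]` and below it on `[p, ∞)`; the
intermediate value theorem on `[0, m̄]` provides `p`. Since `f` is monotone, an orbit started on
either side of `p` is monotone and trapped between its start and `p`, so it converges, and by
continuity its limit is a fixed point, hence `p`.
-/

open Set Function Filter Topology

theorem isFixedPt_of_tendsto_iterate_of_continuousWithinAt {α : Type*} [TopologicalSpace α]
    [T2Space α] {f : α → α} {s : Set α} {x y : α}
    (hy : Tendsto (fun n => f^[n] x) atTop (𝓝 y)) (hs : ∀ n, f^[n] x ∈ s)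
    (hf : ContinuousWithinAt f s y) : IsFixedPt f y := by
  refine tendsto_nhds_unique ((tendsto_add_atTop_iff_nat 1).1 ?_) hy
  simp only [iterate_succ' f]
  exact hf.tendsto.comp (tendsto_nhdsWithin_iff.2 ⟨hy, .of_forall hs⟩)

section MonotoneOrbit

variable {α : Type*} [ConditionallyCompleteLinearOrder α] [TopologicalSpace α] [OrderTopology α]
  {f : α → α} {x₀ p : α}

theorem tendsto_iterate_of_le_fixedPt (hx₀ : x₀ ≤ p) (hmono : MonotoneOn f (Icc x₀ p))
    (hcont : ContinuousOn f (Icc x₀ p)) (hp : IsFixedPt f p) (hle : ∀ x ∈ Icc x₀ p, x ≤ f x)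
    (huniq : ∀ x ∈ Icc x₀ p, IsFixedPt f x → x = p) :
    Tendsto (fun n => f^[n] x₀) atTop (𝓝 p) := by
  have hmaps : MapsTo f (Icc x₀ p) (Icc x₀ p) := fun x hx =>
    ⟨hx.1.trans (hle x hx), hp ▸ hmono hx ⟨hx₀, le_rfl⟩ hx.2⟩
  have hmem : ∀ n, f^[n] x₀ ∈ Icc x₀ p := fun n => hmaps.iterate n ⟨le_rfl, hx₀⟩
  have horbit : Monotone fun n => f^[n] x₀ := monotone_nat_of_le_succ fun n => by
    rw [iterate_succ_apply']
    exact hle _ (hmem n)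
  have hlim := tendsto_atTop_ciSup horbit ⟨p, forall_mem_range.2 fun n => (hmem n).2⟩
  have hL : ⨆ n, f^[n] x₀ ∈ Icc x₀ p := isClosed_Icc.mem_of_tendsto hlim (.of_forall hmem)
  rwa [← huniq _ hL (isFixedPt_of_tendsto_iterate_of_continuousWithinAt hlim hmem (hcont _ hL))]

theorem tendsto_iterate_of_fixedPt_le (hx₀ : p ≤ x₀) (hmono : MonotoneOn f (Icc p x₀))
    (hcont : ContinuousOn f (Icc p x₀)) (hp : IsFixedPt f p) (hle : ∀ x ∈ Icc p x₀, f x ≤ x)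
    (huniq : ∀ x ∈ Icc p x₀, IsFixedPt f x → x = p) :
    Tendsto (fun n => f^[n] x₀) atTop (𝓝 p) := by
  have hIcc : Icc (OrderDual.toDual x₀) (OrderDual.toDual p) = OrderDual.ofDual ⁻¹' Icc p x₀ :=
    Icc_toDual
  refine tendsto_iterate_of_le_fixedPt (α := αᵒᵈ) (f := f) hx₀ ?_ ?_ hp ?_ ?_ <;> erw [hIcc]
  exacts [hmono.dual, hcont, hle, huniq]

end MonotoneOrbit

section ConcaveFixedPoint

variable {f : ℝ → ℝ} {x p : ℝ}

theorem pos_of_isFixedPt (hf0 : 0 < f 0) (hx : 0 ≤ x) (hfx : IsFixedPt f x) : 0 < x :=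
  hx.lt_of_ne fun h => hf0.ne' (h ▸ hfx)

theorem ConcaveOn.strictAntiOn_div_self (hf : ConcaveOn ℝ (Ici 0) f) (hf0 : 0 < f 0) :
    StrictAntiOn (fun x => f x / x) (Ioi 0) := by
  intro x hx y hy hxy
  have hsec := hf.neg.secant_mono self_mem_Ici (mem_Ici.2 hx.le) (mem_Ici.2 hy.le)
    hx.ne' hy.ne' hxy.le
  simp only [Pi.neg_apply, sub_zero, neg_sub_neg, sub_div] at hsec
  have : f 0 / y < f 0 / x := div_lt_div_of_pos_left hf0 hx hxy
  show f y / y < f x / x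
  linarith

theorem ConcaveOn.le_apply_of_mem_Icc (hf : ConcaveOn ℝ (Ici 0) f) (hf0 : 0 < f 0)
    (hx : x ∈ Icc 0 p) (hp : IsFixedPt f p) : x ≤ f x := by
  obtain rfl | hx0 := hx.1.eq_or_lt
  · exact hf0.le
  have hslope : f p / p ≤ f x / x :=
    (hf.strictAntiOn_div_self hf0).antitoneOn hx0 (hx0.trans_le hx.2) hx.2
  rw [hp, div_self (hx0.trans_le hx.2).ne', one_le_div hx0] at hslope
  exact hslope

theorem ConcaveOn.apply_le_of_le (hf : ConcaveOn ℝ (Ici 0) f) (hf0 : 0 < f 0) (hp0 : 0 < p)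
    (hpx : p ≤ x) (hp : IsFixedPt f p) : f x ≤ x := by
  have hslope : f x / x ≤ f p / p :=
    (hf.strictAntiOn_div_self hf0).antitoneOn hp0 (hp0.trans_le hpx) hpx
  rw [hp, div_self hp0.ne', div_le_one (hp0.trans_le hpx)] at hslope
  exact hslope

theorem ConcaveOn.eq_of_isFixedPt (hf : ConcaveOn ℝ (Ici 0) f) (hf0 : 0 < f 0)
    (hx0 : 0 < x) (hp0 : 0 < p) (hx : IsFixedPt f x) (hp : IsFixedPt f p) : x = p :=
  (hf.strictAntiOn_div_self hf0).injOn hx0 hp0 <| by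
    simp only [hx.eq, hp.eq, div_self hx0.ne', div_self hp0.ne']

end ConcaveFixedPoint

theorem unique_stable_fixed_point_general (f : ℝ → ℝ)
    (hcont : ContinuousOn f (Set.Ici 0))
    (hmono : MonotoneOn f (Set.Ici 0))
    (hconc : ConcaveOn ℝ (Set.Ici 0) f)
    (hf0 : 0 < f 0)
    (hbar : ∃ mbar : ℝ, 0 < mbar ∧ f mbar < mbar) :
    ∃ mstar : ℝ, 0 < mstar ∧ f mstar = mstar ∧
      (∀ m : ℝ, 0 ≤ m → f m = m → m = mstar) ∧
      (∀ m₀ : ℝ, 0 ≤ m₀ → Tendsto (fun t : ℕ => f^[t] m₀) atTop (nhds mstar)) := by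
  obtain ⟨mbar, hmbar, hfbar⟩ := hbar
  obtain ⟨p, hp, hfix⟩ :=
    exists_mem_Icc_isFixedPt (hcont.mono Icc_subset_Ici_self) hmbar.le hf0.le hfbar.le
  have hp0 : 0 < p := pos_of_isFixedPt hf0 hp.1 hfix
  have huniq : ∀ m : ℝ, 0 ≤ m → f m = m → m = p := fun m hm hfm =>
    hconc.eq_of_isFixedPt hf0 (pos_of_isFixedPt hf0 hm hfm) hp0 hfm hfix
  refine ⟨p, hp0, hfix, huniq, fun m₀ hm₀ => ?_⟩
  rcases le_total m₀ p with hle | hle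
  · have hsub : Icc m₀ p ⊆ Ici 0 := fun x hx => hm₀.trans hx.1
    exact tendsto_iterate_of_le_fixedPt hle (hmono.mono hsub) (hcont.mono hsub) hfix
      (fun x hx => hconc.le_apply_of_mem_Icc hf0 ⟨hsub hx, hx.2⟩ hfix)
      (fun x hx => huniq x (hsub hx))
  · have hsub : Icc p m₀ ⊆ Ici 0 := fun x hx => hp0.le.trans hx.1
    exact tendsto_iterate_of_fixedPt_le hle (hmono.mono hsub) (hcont.mono hsub) hfix
      (fun x hx => hconc.apply_le_of_le hf0 hp0 hx.1 hfix)
      (fun x hx => huniq x (hsub hx))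

/-- Let `f : [0, ∞) → [0, ∞)` be continuous, nondecreasing and concave on `[0, ∞)`, with
`f(0) > 0`, and suppose `f(m̄) < m̄` for some `m̄ > 0`. Then `f` has a unique fixed point
`m*` (which is positive), and for every starting point `m₀ ≥ 0` the iterates
`m_{t+1} = f(m_t)` converge to `m*`. -/
theorem unique_stable_fixed_point (f : ℝ → ℝ)
    (hmap : ∀ m : ℝ, 0 ≤ m → 0 ≤ f m)
    (hcont : ContinuousOn f (Set.Ici 0))
    (hmono : MonotoneOn f (Set.Ici 0))
    (hconc : ConcaveOn ℝ (Set.Ici 0) f)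
    (hf0 : 0 < f 0)
    (hbar : ∃ mbar : ℝ, 0 < mbar ∧ f mbar < mbar) :
    ∃ mstar : ℝ, 0 < mstar ∧ f mstar = mstar ∧
      (∀ m : ℝ, 0 ≤ m → f m = m → m = mstar) ∧
      (∀ m₀ : ℝ, 0 ≤ m₀ → Tendsto (fun t : ℕ => f^[t] m₀) atTop (nhds mstar)) :=
  unique_stable_fixed_point_general f hcont hmono hconc hf0 hbar
end

section
/- For every τ > 0 the parametric phase-transition point is well defined and lies on the phase-transition boundary: δ(τ) > 0, ρ(τ) > 0, and ρ(τ)·δ(τ)·(1+τ²) + (1 − ρ(τ)·δ(τ))·2χ₂(τ) = δ(τ); equivalently ρ(τ) = (δ(τ) − 2χ₂(τ)) / ( δ(τ)·(1 + τ² − 2χ₂(τ)) ), which states that the slope at m = 0 of the noiseless MSE map with sparsity fraction ε = ρ(τ)δ(τ) and undersampling ratio δ(τ) equals exactly 1. -/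
open MeasureTheory Filter

/-- `χ₁(τ) = ∫_τ^∞ ω (τ − ω) e^{−ω²} dω`. -/
noncomputable def chi1 (τ : ℝ) : ℝ :=
  ∫ ω in Set.Ioi τ, ω * (τ - ω) * Real.exp (-ω ^ 2)

/-- The undersampling ratio `δ(τ)` along the parametric phase-transition curve. -/
noncomputable def deltaPT (τ : ℝ) : ℝ :=
  (4 * (1 + τ ^ 2) * chi1 τ - 4 * τ * chi2 τ) / (4 * chi1 τ - 2 * τ)

/-- The sparsity ratio `ρ(τ)` along the parametric phase-transition curve. -/
noncomputable def rhoPT (τ : ℝ) : ℝ :=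
  chi1 τ / ((1 + τ ^ 2) * chi1 τ - τ * chi2 τ)

/-!
Write `a = χ₁(τ)` and `b = χ₂(τ)`. Then `δ = 2((1+τ²)a − τb)/(2a − τ)` and `ρδ = 2a/(2a − τ)`,
so the boundary identity is a formal consequence of the definitions once the two denominators
are nonzero. For `τ ≥ 0` the integrands give `a < 0 < b`, which makes both denominators negative
and `δ, ρ` positive. The solved form for `ρ` also needs `2b < 1 + τ²`, which holds for `τ > 0`
because `ω (ω − τ)² ≤ ω³` on `(τ, ∞)` and `∫_τ^∞ ω³ e^{−ω²} dω = (1 + τ²) e^{−τ²} / 2`.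
-/

open Real Set

theorem integrable_pow_mul_exp_neg_mul_sq {b : ℝ} (hb : 0 < b) (n : ℕ) :
    Integrable fun x : ℝ => x ^ n * exp (-b * x ^ 2) := by
  simpa [Real.rpow_natCast] using
    integrable_rpow_mul_exp_neg_mul_sq hb (s := n) (by linarith [n.cast_nonneg (α := ℝ)])

theorem integrable_pow_mul_exp_neg_sq (n : ℕ) :
    Integrable fun x : ℝ => x ^ n * exp (-x ^ 2) := by
  simpa using integrable_pow_mul_exp_neg_mul_sq one_pos n

theorem setIntegral_pos_of_pos_on {X : Type*} [MeasurableSpace X] {μ : Measure X} {s : Set X}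
    {f : X → ℝ} (hs : MeasurableSet s) (hμs : μ s ≠ 0) (hf : IntegrableOn f s μ)
    (hpos : ∀ x ∈ s, 0 < f x) : 0 < ∫ x in s, f x ∂μ := by
  rw [setIntegral_pos_iff_support_of_nonneg_ae ?_ hf]
  · calc 0 < μ s := pos_iff_ne_zero.mpr hμs
      _ ≤ μ (Function.support f ∩ s) := measure_mono fun x hx => ⟨(hpos x hx).ne', hx⟩
  · filter_upwards [ae_restrict_mem hs] with x hx using (hpos x hx).le

theorem integral_Ioi_pow_three_mul_exp_neg_sq (τ : ℝ) :
    ∫ ω in Ioi τ, ω ^ 3 * exp (-ω ^ 2) = (τ ^ 2 + 1) * exp (-τ ^ 2) / 2 := by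
  set F : ℝ → ℝ := fun x => -(x ^ 2 + 1) * exp (-x ^ 2) / 2
  have hF : ∀ x ∈ Ici τ, HasDerivAt F (x ^ 3 * exp (-x ^ 2)) x := fun x _ => by
    have hsq : HasDerivAt (fun x : ℝ => -x ^ 2) (-(2 * x)) x := by
      simpa [Pi.neg_def] using (hasDerivAt_pow 2 x).neg
    have hpoly : HasDerivAt (fun x : ℝ => -(x ^ 2 + 1)) (-(2 * x)) x := by
      simpa [Pi.neg_def] using ((hasDerivAt_pow 2 x).add_const 1).neg
    exact ((hpoly.mul hsq.exp).div_const 2).congr_deriv (by ring)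
  have hF_lim : Tendsto F atTop (nhds 0) := by
    have h := (((tendsto_pow_mul_exp_neg_atTop_nhds_zero 1).add
      tendsto_exp_neg_atTop_nhds_zero).comp (tendsto_pow_atTop two_ne_zero)).neg.div_const 2
    convert h using 2 with x
    · simp only [F, Function.comp, pow_one]; ring
    · norm_num
  rw [integral_Ioi_of_hasDerivAt_of_tendsto' hF (integrable_pow_mul_exp_neg_sq 3).integrableOn
    hF_lim]
  simp only [F]; ring

theorem integrable_chi1_integrand (τ : ℝ) :
    Integrable fun ω : ℝ => ω * (τ - ω) * exp (-ω ^ 2) := by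
  refine (((integrable_pow_mul_exp_neg_sq 1).const_mul τ).sub
    (integrable_pow_mul_exp_neg_sq 2)).congr (.of_forall fun ω => ?_)
  simp only [Pi.sub_apply]; ring

theorem integrable_chi2_integrand (τ : ℝ) :
    Integrable fun ω : ℝ => ω * (ω - τ) ^ 2 * exp (-ω ^ 2) := by
  refine (((integrable_pow_mul_exp_neg_sq 3).sub ((integrable_pow_mul_exp_neg_sq 2).const_mul
    (2 * τ))).add ((integrable_pow_mul_exp_neg_sq 1).const_mul (τ ^ 2))).congr
    (.of_forall fun ω => ?_)
  simp only [Pi.sub_apply, Pi.add_apply]; ring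

section

variable {τ : ℝ}

theorem chi1_neg (hτ : 0 ≤ τ) : chi1 τ < 0 := by
  have h : 0 < ∫ ω in Ioi τ, -(ω * (τ - ω) * exp (-ω ^ 2)) :=
    setIntegral_pos_of_pos_on measurableSet_Ioi (by simp)
      (integrable_chi1_integrand τ).neg.integrableOn fun ω (hω : τ < ω) =>
        neg_pos.mpr <| mul_neg_of_neg_of_pos
          (mul_neg_of_pos_of_neg (hτ.trans_lt hω) (sub_neg.mpr hω)) (exp_pos _)
  rw [integral_neg] at h
  exact neg_pos.mp h

theorem chi2_pos (hτ : 0 ≤ τ) : 0 < chi2 τ :=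
  setIntegral_pos_of_pos_on measurableSet_Ioi (by simp) (integrable_chi2_integrand τ).integrableOn
    fun ω (hω : τ < ω) =>
      mul_pos (mul_pos (hτ.trans_lt hω) (pow_pos (sub_pos.mpr hω) 2)) (exp_pos _)

theorem chi2_le (hτ : 0 ≤ τ) : chi2 τ ≤ (τ ^ 2 + 1) * exp (-τ ^ 2) / 2 := by
  rw [chi2, ← integral_Ioi_pow_three_mul_exp_neg_sq]
  refine setIntegral_mono_on (integrable_chi2_integrand τ).integrableOn
    (integrable_pow_mul_exp_neg_sq 3).integrableOn measurableSet_Ioi fun ω (hω : τ < ω) => ?_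
  refine mul_le_mul_of_nonneg_right ?_ (exp_pos _).le
  -- `ω³ - ω (ω - τ)² = ω τ (2ω - τ)`
  nlinarith [mul_nonneg (mul_nonneg (hτ.trans hω.le) hτ) (by linarith : 0 ≤ 2 * ω - τ)]

theorem two_mul_chi2_lt (hτ : 0 < τ) : 2 * chi2 τ < 1 + τ ^ 2 := by
  have hexp : exp (-τ ^ 2) < 1 := exp_lt_one_iff.mpr (by nlinarith)
  nlinarith [chi2_le hτ.le]

theorem deltaPT_eq :
    deltaPT τ = 2 * ((1 + τ ^ 2) * chi1 τ - τ * chi2 τ) / (2 * chi1 τ - τ) := by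
  rw [deltaPT, ← mul_div_mul_left _ (2 * chi1 τ - τ) (two_ne_zero' ℝ)]
  ring_nf

theorem chi_denominators_neg (hτ : 0 ≤ τ) :
    (1 + τ ^ 2) * chi1 τ - τ * chi2 τ < 0 ∧ 2 * chi1 τ - τ < 0 := by
  have ha := chi1_neg hτ
  have hb := chi2_pos hτ
  constructor <;> nlinarith

theorem deltaPT_pos (hτ : 0 ≤ τ) : 0 < deltaPT τ := by
  obtain ⟨hD, hE⟩ := chi_denominators_neg hτ
  rw [deltaPT_eq]
  exact div_pos_of_neg_of_neg (by linarith) hE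

theorem rhoPT_pos (hτ : 0 ≤ τ) : 0 < rhoPT τ :=
  div_pos_of_neg_of_neg (chi1_neg hτ) (chi_denominators_neg hτ).1

theorem rhoPT_mul_deltaPT (hD : (1 + τ ^ 2) * chi1 τ - τ * chi2 τ ≠ 0) :
    rhoPT τ * deltaPT τ = 2 * chi1 τ / (2 * chi1 τ - τ) := by
  rw [rhoPT, deltaPT_eq, div_mul_div_comm, mul_left_comm, ← mul_assoc, mul_comm _ (2 * chi1 τ - τ),
    mul_div_mul_right _ _ hD]

theorem phase_transition_boundary (hD : (1 + τ ^ 2) * chi1 τ - τ * chi2 τ ≠ 0)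
    (hE : 2 * chi1 τ - τ ≠ 0) :
    rhoPT τ * deltaPT τ * (1 + τ ^ 2) + (1 - rhoPT τ * deltaPT τ) * (2 * chi2 τ) = deltaPT τ := by
  rw [rhoPT_mul_deltaPT hD, deltaPT_eq]
  field_simp [hE]
  ring

end

/-- For every `τ > 0` the parametric phase-transition point is well defined and lies on
the phase-transition boundary: `δ(τ) > 0`, `ρ(τ) > 0`, and
`ρ(τ)δ(τ)(1+τ²) + (1 − ρ(τ)δ(τ))·2χ₂(τ) = δ(τ)`, equivalently
`ρ(τ) = (δ(τ) − 2χ₂(τ)) / (δ(τ)(1 + τ² − 2χ₂(τ)))`: the slope at `m = 0` of the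
noiseless MSE map with sparsity fraction `ε = ρ(τ)δ(τ)` and undersampling ratio `δ(τ)`
equals exactly `1`. -/
theorem phase_transition_parametric (τ : ℝ) (hτ : 0 < τ) :
    0 < deltaPT τ ∧ 0 < rhoPT τ ∧
    rhoPT τ * deltaPT τ * (1 + τ ^ 2) + (1 - rhoPT τ * deltaPT τ) * (2 * chi2 τ) =
      deltaPT τ ∧
    rhoPT τ = (deltaPT τ - 2 * chi2 τ) / (deltaPT τ * (1 + τ ^ 2 - 2 * chi2 τ)) := by
  obtain ⟨hD, hE⟩ := chi_denominators_neg hτ.le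
  have hδ := deltaPT_pos hτ.le
  have hboundary := phase_transition_boundary hD.ne hE.ne
  refine ⟨hδ, rhoPT_pos hτ.le, hboundary, ?_⟩
  rw [eq_div_iff (mul_pos hδ (by linarith [two_mul_chi2_lt hτ])).ne']
  linear_combination hboundary
end

section
/- The Gaussian tail integral χ₂ satisfies the Laplace-type asymptotic lim_{τ → ∞} 4·τ²·exp(τ²)·χ₂(τ) = 1; that is, ∫_τ^∞ ω·(ω − τ)²·exp(−ω²) dω ∼ exp(−τ²)/(4τ²) as τ → ∞. -/
/-! After the substitution `ω = τ + s` one has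
`e^{τ²} χ₂(τ) = ∫₀^∞ (s + τ) s² e^{-s²} e^{-2τs} ds`. The weight `e^{-2τs}` concentrates the
integral near `s = 0`, where `1 - s² ≤ e^{-s²} ≤ 1`; with these bounds the integral is squeezed
between Gamma integrals `∫₀^∞ sⁿ e^{-2τs} ds = n! / (2τ)ⁿ⁺¹`, and both bounds are
`(1 + O(τ⁻²)) / (4τ²)`. -/

open MeasureTheory Filter

open Set Real
open scoped Nat

lemma integrableOn_pow_mul_exp_neg_mul_Ioi (n : ℕ) {b : ℝ} (hb : 0 < b) :
    IntegrableOn (fun s : ℝ => s ^ n * exp (-(b * s))) (Ioi 0) := by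
  refine (integrableOn_rpow_mul_exp_neg_mul_rpow (s := n) (p := 1)
    (neg_one_lt_zero.trans_le n.cast_nonneg) one_pos hb).congr_fun (fun s _ => ?_) measurableSet_Ioi
  simp [Real.rpow_natCast]

lemma integral_pow_mul_exp_neg_mul_Ioi (n : ℕ) {b : ℝ} (hb : 0 < b) :
    ∫ s in Ioi (0 : ℝ), s ^ n * exp (-(b * s)) = n ! / b ^ (n + 1) := by
  have h := integral_rpow_mul_exp_neg_mul_Ioi (a := n + 1) (by positivity) hb
  rw [add_sub_cancel_right, Real.Gamma_nat_eq_factorial, ← Nat.cast_succ] at h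
  simp_rw [Real.rpow_natCast] at h
  rw [h, one_div, inv_pow, inv_mul_eq_div]

lemma setIntegral_Ioi_eq_integral_comp_add {E : Type*} [NormedAddCommGroup E] [NormedSpace ℝ E]
    (f : ℝ → E) (a : ℝ) : ∫ x in Ioi a, f x = ∫ s in Ioi 0, f (s + a) := by
  simpa using ((measurePreserving_add_right volume a).setIntegral_preimage_emb
    (measurableEmbedding_addRight a) f (Ioi a)).symm

lemma exp_sq_mul_chi2 (τ : ℝ) :
    exp (τ ^ 2) * chi2 τ = ∫ s in Ioi 0, (s + τ) * s ^ 2 * exp (-s ^ 2) * exp (-(2 * τ * s)) := by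
  rw [chi2, setIntegral_Ioi_eq_integral_comp_add, ← integral_const_mul]
  refine setIntegral_congr_fun measurableSet_Ioi fun s _ => ?_
  have hexp : exp (τ ^ 2) * exp (-(s + τ) ^ 2) = exp (-s ^ 2) * exp (-(2 * τ * s)) := by
    rw [← exp_add, ← exp_add]; ring_nf
  linear_combination (s + τ) * s ^ 2 * hexp

section Bounds

variable {τ : ℝ}

lemma add_mul_sq_mul_exp_neg_sq_le (hτ : 0 ≤ τ) {s : ℝ} (hs : 0 ≤ s) :
    (s + τ) * s ^ 2 * exp (-s ^ 2) ≤ τ * s ^ 2 + s ^ 3 := by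
  have hexp : exp (-s ^ 2) ≤ 1 := exp_le_one_iff.2 (neg_nonpos.2 (sq_nonneg s))
  nlinarith [mul_le_mul_of_nonneg_left hexp (by positivity : 0 ≤ (s + τ) * s ^ 2)]

lemma mul_sub_pow_le_add_mul_sq_mul_exp_neg_sq (hτ : 0 ≤ τ) {s : ℝ} (hs : 0 ≤ s) :
    τ * (s ^ 2 - s ^ 4) ≤ (s + τ) * s ^ 2 * exp (-s ^ 2) := by
  have hexp : 1 - s ^ 2 ≤ exp (-s ^ 2) := by linarith [add_one_le_exp (-s ^ 2)]
  have : 0 ≤ s ^ 3 * exp (-s ^ 2) := by positivity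
  nlinarith [mul_le_mul_of_nonneg_left hexp (by positivity : 0 ≤ τ * s ^ 2)]

variable (hτ : 0 < τ)
include hτ

lemma integrableOn_exp_sq_mul_chi2_integrand :
    IntegrableOn (fun s => (s + τ) * s ^ 2 * exp (-s ^ 2) * exp (-(2 * τ * s))) (Ioi 0) := by
  have hb : 0 < 2 * τ := by positivity
  refine Integrable.mono' (((integrableOn_pow_mul_exp_neg_mul_Ioi 2 hb).const_mul τ).add
    (integrableOn_pow_mul_exp_neg_mul_Ioi 3 hb)) (by fun_prop) ?_
  refine (ae_restrict_iff' measurableSet_Ioi).2 (ae_of_all _ fun s (hs : 0 < s) => ?_)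
  rw [Pi.add_apply, norm_of_nonneg (by positivity)]
  have := mul_le_mul_of_nonneg_right (add_mul_sq_mul_exp_neg_sq_le hτ.le hs.le)
    (exp_pos (-(2 * τ * s))).le
  linarith

lemma exp_sq_mul_chi2_le : exp (τ ^ 2) * chi2 τ ≤ 1 / (4 * τ ^ 2) + 3 / (8 * τ ^ 4) := by
  have hb : 0 < 2 * τ := by positivity
  have h2 := (integrableOn_pow_mul_exp_neg_mul_Ioi 2 hb).const_mul τ
  have h3 := integrableOn_pow_mul_exp_neg_mul_Ioi 3 hb
  calc exp (τ ^ 2) * chi2 τ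
      ≤ ∫ s in Ioi 0, τ * (s ^ 2 * exp (-(2 * τ * s))) + s ^ 3 * exp (-(2 * τ * s)) := by
        rw [exp_sq_mul_chi2]
        refine setIntegral_mono_on (integrableOn_exp_sq_mul_chi2_integrand hτ) (h2.add h3)
          measurableSet_Ioi fun s (hs : 0 < s) => ?_
        have := mul_le_mul_of_nonneg_right (add_mul_sq_mul_exp_neg_sq_le hτ.le hs.le)
          (exp_pos (-(2 * τ * s))).le
        linarith
    _ = 1 / (4 * τ ^ 2) + 3 / (8 * τ ^ 4) := by
        rw [integral_add h2 h3, integral_const_mul, integral_pow_mul_exp_neg_mul_Ioi 2 hb,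
          integral_pow_mul_exp_neg_mul_Ioi 3 hb]
        norm_num [Nat.factorial]
        field_simp
        ring

lemma le_exp_sq_mul_chi2 : 1 / (4 * τ ^ 2) - 3 / (4 * τ ^ 4) ≤ exp (τ ^ 2) * chi2 τ := by
  have hb : 0 < 2 * τ := by positivity
  have h2 := (integrableOn_pow_mul_exp_neg_mul_Ioi 2 hb).const_mul τ
  have h4 := (integrableOn_pow_mul_exp_neg_mul_Ioi 4 hb).const_mul τ
  calc 1 / (4 * τ ^ 2) - 3 / (4 * τ ^ 4)
      = ∫ s in Ioi 0, τ * (s ^ 2 * exp (-(2 * τ * s))) - τ * (s ^ 4 * exp (-(2 * τ * s))) := by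
        rw [integral_sub h2 h4, integral_const_mul, integral_const_mul,
          integral_pow_mul_exp_neg_mul_Ioi 2 hb, integral_pow_mul_exp_neg_mul_Ioi 4 hb]
        norm_num [Nat.factorial]
        field_simp
        ring
    _ ≤ exp (τ ^ 2) * chi2 τ := by
        rw [exp_sq_mul_chi2]
        refine setIntegral_mono_on (h2.sub h4) (integrableOn_exp_sq_mul_chi2_integrand hτ)
          measurableSet_Ioi fun s (hs : 0 < s) => ?_
        have := mul_le_mul_of_nonneg_right (mul_sub_pow_le_add_mul_sq_mul_exp_neg_sq hτ.le hs.le)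
          (exp_pos (-(2 * τ * s))).le
        linarith

end Bounds

/-- Laplace-type asymptotic for the Gaussian tail integral `χ₂`:
`lim_{τ → ∞} 4 τ² e^{τ²} χ₂(τ) = 1`, i.e.
`∫_τ^∞ ω (ω − τ)² e^{−ω²} dω ∼ e^{−τ²}/(4τ²)` as `τ → ∞`. -/
theorem chi2_laplace_asymptotic :
    Tendsto (fun τ : ℝ => 4 * τ ^ 2 * Real.exp (τ ^ 2) * chi2 τ) atTop (nhds 1) := by
  have hinv : Tendsto (fun τ : ℝ => (τ ^ 2)⁻¹) atTop (nhds 0) :=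
    tendsto_inv_atTop_zero.comp (tendsto_pow_atTop two_ne_zero)
  have hlower : Tendsto (fun τ : ℝ => 1 - 3 * (τ ^ 2)⁻¹) atTop (nhds 1) := by
    simpa using (hinv.const_mul 3).const_sub 1
  have hupper : Tendsto (fun τ : ℝ => 1 + 3 / 2 * (τ ^ 2)⁻¹) atTop (nhds 1) := by
    simpa using (hinv.const_mul (3 / 2)).const_add 1
  refine tendsto_of_tendsto_of_tendsto_of_le_of_le' hlower hupper ?_ ?_ <;>
    filter_upwards [eventually_gt_atTop 0] with τ hτ
  · have := mul_le_mul_of_nonneg_left (le_exp_sq_mul_chi2 hτ) (by positivity : 0 ≤ 4 * τ ^ 2)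
    convert this using 1 <;> field_simp
  · have := mul_le_mul_of_nonneg_left (exp_sq_mul_chi2_le hτ) (by positivity : 0 ≤ 4 * τ ^ 2)
    convert this using 1 <;> field_simp
    ring
end
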